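/- arXiv:2209.12040 — 6 statements merged into one kernel-verified Lean document; each statement's English description precedes it below -/
import Mathlib

section
/- Let (μ̂, λ̂, x̂) be an approximate 2D-eigentriplet of Hermitian matrices (A, C) with μ̂, λ̂ ∈ ℝ, ‖x̂‖ = 1, and define γ_A = x̂ᴴAx̂ − λ̂, γ_C = x̂ᴴCx̂, r = (A − μ̂C − λ̂I)x̂, and η₁ = max{|γ_A|/‖A‖, |γ_C|/‖C‖, ‖r‖/(‖A‖ + |μ̂|‖C‖)}. If δA, δC are Hermitian perturbations such that (μ̂, λ̂, x̂) is an exact 2D-eigentriplet of (A + δA, C + δC), then max{‖δA‖/‖A‖, ‖δC‖/‖C‖} ≥ η₁. -/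
/-!
Since `(μ, λ, x)` is an exact 2D-eigentriplet of `(A + δA, C + δC)`, the residual quantities of
the unperturbed pair are expressed through the perturbations alone:
`xᴴAx - λ = -xᴴδAx`, `xᴴCx = -xᴴδCx` and `(A - μC - λI)x = -(δA - μδC)x`. As `‖x‖ = 1`,
Cauchy–Schwarz and the operator-norm bound give `|γ_A| ≤ ‖δA‖`, `|γ_C| ≤ ‖δC‖` and
`‖r‖ ≤ ‖δA‖ + |μ|‖δC‖`, and each right-hand side is at most `η` times the corresponding
denominator of `η₁`, where `η = max{‖δA‖/‖A‖, ‖δC‖/‖C‖}`.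
-/

open scoped Matrix

/-- Spectral (ℓ²-operator) norm of a square complex matrix. -/
noncomputable def specNorm {n : Type*} [Fintype n] [DecidableEq n]
    (M : Matrix n n ℂ) : ℝ :=
  ‖Matrix.toEuclideanCLM (𝕜 := ℂ) M‖

/-- Euclidean norm of a complex vector. -/
noncomputable def vecNorm {n : Type*} [Fintype n] (x : n → ℂ) : ℝ :=
  ‖(EuclideanSpace.equiv n ℂ).symm x‖

/-- A Hermitian matrix is indefinite: its quadratic form takes both
positive and negative values. -/
def IsIndefinite {n : Type*} [Fintype n] (M : Matrix n n ℂ) : Prop :=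
  (∃ y : n → ℂ, 0 < (star y ⬝ᵥ M.mulVec y).re) ∧
  (∃ z : n → ℂ, (star z ⬝ᵥ M.mulVec z).re < 0)

/-- `(μ, lam, x)` is a 2D-eigentriplet of the pair `(A, C)`:
`(A - μ C) x = lam x`, `xᴴ C x = 0`, `xᴴ x = 1`. -/
def Is2DEigentriplet {n : Type*} [Fintype n] (A C : Matrix n n ℂ)
    (μ lam : ℝ) (x : n → ℂ) : Prop :=
  (A - (μ : ℂ) • C).mulVec x = (lam : ℂ) • x ∧
  star x ⬝ᵥ C.mulVec x = 0 ∧ star x ⬝ᵥ x = 1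

open scoped Matrix.Norms.L2Operator

section Norms

variable {n : Type*} [Fintype n]

lemma specNorm_eq_l2_opNorm [DecidableEq n] (M : Matrix n n ℂ) : specNorm M = ‖M‖ := rfl

lemma vecNorm_mulVec_le [DecidableEq n] (M : Matrix n n ℂ) (x : n → ℂ) :
    vecNorm (M *ᵥ x) ≤ specNorm M * vecNorm x :=
  M.l2_opNorm_mulVec (WithLp.toLp 2 x)

lemma specNorm_pos [DecidableEq n] {M : Matrix n n ℂ} (hM : M ≠ 0) : 0 < specNorm M := by
  rw [specNorm_eq_l2_opNorm]
  exact norm_pos_iff.2 hM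

lemma vecNorm_neg (v : n → ℂ) : vecNorm (-v) = vecNorm v := norm_neg (WithLp.toLp 2 v)

lemma norm_star_dotProduct_le (x y : n → ℂ) : ‖star x ⬝ᵥ y‖ ≤ vecNorm x * vecNorm y := by
  rw [dotProduct_comm, ← EuclideanSpace.inner_toLp_toLp]
  exact norm_inner_le_norm _ _

lemma vecNorm_eq_one {x : n → ℂ} (hx : star x ⬝ᵥ x = 1) : vecNorm x = 1 := by
  rw [vecNorm, norm_eq_sqrt_re_inner (𝕜 := ℂ)]
  change √(RCLike.re (inner ℂ (WithLp.toLp 2 x) (WithLp.toLp 2 x))) = 1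
  rw [EuclideanSpace.inner_toLp_toLp, dotProduct_comm, hx]
  simp

lemma norm_star_dotProduct_mulVec_le [DecidableEq n] (M : Matrix n n ℂ) (x : n → ℂ) :
    ‖star x ⬝ᵥ M *ᵥ x‖ ≤ specNorm M * vecNorm x ^ 2 :=
  calc ‖star x ⬝ᵥ M *ᵥ x‖ ≤ vecNorm x * vecNorm (M *ᵥ x) := norm_star_dotProduct_le _ _
    _ ≤ vecNorm x * (specNorm M * vecNorm x) := by
      gcongr
      · exact norm_nonneg _
      · exact vecNorm_mulVec_le M x
    _ = specNorm M * vecNorm x ^ 2 := by ring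

lemma specNorm_sub_smul_le [DecidableEq n] (M N : Matrix n n ℂ) (μ : ℝ) :
    specNorm (M - (μ : ℂ) • N) ≤ specNorm M + |μ| * specNorm N := by
  simp only [specNorm_eq_l2_opNorm]
  calc ‖M - (μ : ℂ) • N‖ ≤ ‖M‖ + ‖(μ : ℂ) • N‖ := norm_sub_le _ _
    _ = ‖M‖ + |μ| * ‖N‖ := by rw [norm_smul, Complex.norm_real, Real.norm_eq_abs]

end Norms

namespace Is2DEigentriplet

variable {n : Type*} [Fintype n] {A C δA δC : Matrix n n ℂ} {μ lam : ℝ} {x : n → ℂ}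

lemma star_dotProduct_mulVec_eq_neg_of_add (ht : Is2DEigentriplet (A + δA) (C + δC) μ lam x) :
    star x ⬝ᵥ C *ᵥ x = -(star x ⬝ᵥ δC *ᵥ x) := by
  have h := ht.2.1
  rw [Matrix.add_mulVec, dotProduct_add] at h
  linear_combination h

lemma star_dotProduct_mulVec_sub_eq_neg_of_add
    (ht : Is2DEigentriplet (A + δA) (C + δC) μ lam x) :
    star x ⬝ᵥ A *ᵥ x - lam = -(star x ⬝ᵥ δA *ᵥ x) := by
  have hC := ht.star_dotProduct_mulVec_eq_neg_of_add
  have h := congrArg (star x ⬝ᵥ ·) ht.1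
  simp only [Matrix.sub_mulVec, Matrix.add_mulVec, Matrix.smul_mulVec, dotProduct_sub,
    dotProduct_add, dotProduct_smul, smul_eq_mul, ht.2.2, mul_one] at h
  linear_combination h + (μ : ℂ) * hC

lemma residual_eq_neg_of_add [DecidableEq n] (ht : Is2DEigentriplet (A + δA) (C + δC) μ lam x) :
    (A - (μ : ℂ) • C - (lam : ℂ) • 1) *ᵥ x = -((δA - (μ : ℂ) • δC) *ᵥ x) := by
  have hsplit : A - (μ : ℂ) • C - (lam : ℂ) • 1 =
      (A + δA - (μ : ℂ) • (C + δC)) - (lam : ℂ) • 1 - (δA - (μ : ℂ) • δC) := by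
    module
  rw [hsplit, Matrix.sub_mulVec, Matrix.sub_mulVec, ht.1, Matrix.smul_mulVec, Matrix.one_mulVec,
    sub_self, zero_sub]

lemma norm_star_dotProduct_mulVec_le_of_add [DecidableEq n]
    (ht : Is2DEigentriplet (A + δA) (C + δC) μ lam x) :
    ‖star x ⬝ᵥ C *ᵥ x‖ ≤ specNorm δC := by
  rw [ht.star_dotProduct_mulVec_eq_neg_of_add, norm_neg]
  simpa [vecNorm_eq_one ht.2.2] using norm_star_dotProduct_mulVec_le δC x

lemma norm_star_dotProduct_mulVec_sub_le_of_add [DecidableEq n]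
    (ht : Is2DEigentriplet (A + δA) (C + δC) μ lam x) :
    ‖star x ⬝ᵥ A *ᵥ x - lam‖ ≤ specNorm δA := by
  rw [ht.star_dotProduct_mulVec_sub_eq_neg_of_add, norm_neg]
  simpa [vecNorm_eq_one ht.2.2] using norm_star_dotProduct_mulVec_le δA x

lemma vecNorm_residual_le_of_add [DecidableEq n]
    (ht : Is2DEigentriplet (A + δA) (C + δC) μ lam x) :
    vecNorm ((A - (μ : ℂ) • C - (lam : ℂ) • 1) *ᵥ x) ≤ specNorm δA + |μ| * specNorm δC :=
  calc vecNorm ((A - (μ : ℂ) • C - (lam : ℂ) • 1) *ᵥ x)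
      = vecNorm ((δA - (μ : ℂ) • δC) *ᵥ x) := by rw [ht.residual_eq_neg_of_add, vecNorm_neg]
    _ ≤ specNorm (δA - (μ : ℂ) • δC) := by
      simpa [vecNorm_eq_one ht.2.2] using vecNorm_mulVec_le _ x
    _ ≤ specNorm δA + |μ| * specNorm δC := specNorm_sub_smul_le _ _ _

end Is2DEigentriplet

theorem stmt1_general {n : Type*} [Fintype n] [DecidableEq n]
    (A C δA δC : Matrix n n ℂ)
    (hA0 : A ≠ 0) (hC0 : C ≠ 0)
    (μ lam : ℝ) (x : n → ℂ)
    (ht : Is2DEigentriplet (A + δA) (C + δC) μ lam x) :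
    max (max
        (‖star x ⬝ᵥ A.mulVec x - (lam : ℂ)‖ / specNorm A)
        (‖star x ⬝ᵥ C.mulVec x‖ / specNorm C))
      (vecNorm ((A - (μ : ℂ) • C - (lam : ℂ) • 1).mulVec x) /
        (specNorm A + |μ| * specNorm C))
      ≤ max (specNorm δA / specNorm A) (specNorm δC / specNorm C) := by
  set η := max (specNorm δA / specNorm A) (specNorm δC / specNorm C)
  have hApos := specNorm_pos hA0
  have hCpos := specNorm_pos hC0
  have hδA : specNorm δA ≤ η * specNorm A := (div_le_iff₀ hApos).1 (le_max_left _ _)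
  have hδC : specNorm δC ≤ η * specNorm C := (div_le_iff₀ hCpos).1 (le_max_right _ _)
  refine max_le (max_le ?_ ?_) ?_
  · exact (div_le_div_of_nonneg_right ht.norm_star_dotProduct_mulVec_sub_le_of_add
      hApos.le).trans (le_max_left _ _)
  · exact (div_le_div_of_nonneg_right ht.norm_star_dotProduct_mulVec_le_of_add
      hCpos.le).trans (le_max_right _ _)
  · rw [div_le_iff₀ (add_pos_of_pos_of_nonneg hApos (mul_nonneg (abs_nonneg μ) hCpos.le))]
    calc vecNorm ((A - (μ : ℂ) • C - (lam : ℂ) • 1) *ᵥ x)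
        ≤ specNorm δA + |μ| * specNorm δC := ht.vecNorm_residual_le_of_add
      _ ≤ η * specNorm A + |μ| * (η * specNorm C) := by gcongr
      _ = η * (specNorm A + |μ| * specNorm C) := by ring

/-- lower bound on the backward error. If `(μ̂, λ̂, x̂)` is an
exact 2D-eigentriplet of the Hermitian-perturbed pair `(A + δA, C + δC)`,
then `max{‖δA‖/‖A‖, ‖δC‖/‖C‖} ≥ η₁`. -/
theorem stmt1 {n : Type*} [Fintype n] [DecidableEq n]
    (A C δA δC : Matrix n n ℂ)
    (hA : A.IsHermitian) (hC : C.IsHermitian)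
    (hδA : δA.IsHermitian) (hδC : δC.IsHermitian)
    (hA0 : A ≠ 0) (hC0 : C ≠ 0)
    (μ lam : ℝ) (x : n → ℂ) (hx : star x ⬝ᵥ x = 1)
    (ht : Is2DEigentriplet (A + δA) (C + δC) μ lam x) :
    max (max
        (‖star x ⬝ᵥ A.mulVec x - (lam : ℂ)‖ / specNorm A)
        (‖star x ⬝ᵥ C.mulVec x‖ / specNorm C))
      (vecNorm ((A - (μ : ℂ) • C - (lam : ℂ) • 1).mulVec x) /
        (specNorm A + |μ| * specNorm C))
      ≤ max (specNorm δA / specNorm A) (specNorm δC / specNorm C) :=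
  stmt1_general A C δA δC hA0 hC0 μ lam x ht
end

section
/- The backward error η of an approximate 2D-eigentriplet (μ̂, λ̂, x̂) with μ̂, λ̂ ∈ ℝ and ‖x̂‖ = 1, defined as the infimum of ε such that there exist Hermitian δA, δC with ‖δA‖ ≤ ε‖A‖, ‖δC‖ ≤ ε‖C‖, C + δC indefinite, and (μ̂, λ̂, x̂) an exact 2D-eigentriplet of (A + δA, C + δC), satisfies η₁ ≤ η ≤ √2 η₁, where η₁ = max{|x̂ᴴAx̂ − λ̂|/‖A‖, |x̂ᴴCx̂|/‖C‖, ‖(A − μ̂C − λ̂I)x̂‖/(‖A‖ + |μ̂|‖C‖)}. -/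
/-!
Lower bound: for an admissible perturbation, `xᴴ C x = -xᴴ δC x`, `xᴴ A x - λ = -xᴴ δA x` and
`(A - μ C - λ) x = -(δA - μ δC) x`, and each is bounded by `ε` times the matching norm.

Upper bound: write the residual `r = (A - μ C - λ) x` as `-(a - μ c)` with `xᴴ a = -(xᴴ A x - λ)`,
`xᴴ c = -xᴴ C x`, distributing the part of `r` orthogonal to `x` over `a` and `c` with weights
`‖A‖ / (‖A‖ + |μ| ‖C‖)` and `‖C‖ / (‖A‖ + |μ| ‖C‖)`; by Pythagoras `‖a‖ ≤ √2 η₁ ‖A‖` and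
`‖c‖ ≤ √2 η₁ ‖C‖`. Since `xᴴ a` is real, a scaled Householder reflection is a Hermitian `H` with
`H x = a` and `‖H‖ ≤ ‖a‖`; likewise for `c`. The perturbed `C` need not be indefinite; adding
`τ (x uᴴ + u xᴴ)` to `δC` and `μ τ (x uᴴ + u xᴴ)` to `δA`, for a unit `u ⊥ x` and a suitable small
`τ ≥ 0`, keeps the triplet exact and makes it indefinite. This costs an arbitrarily small `δ`, so
`η ≤ √2 η₁` holds only as an infimum.
-/

open scoped Matrix

open scoped InnerProductSpace ComplexConjugate

theorem exists_pos_two_mul_le {p q : ℝ} (hp : 0 < p) (hq : 0 < q) (c : ℝ) :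
    ∃ t > 0, 2 * t ≤ p ∧ 2 * |c| * t ≤ q := by
  refine ⟨p * q / (2 * (q + |c| * p)), by positivity, ?_, ?_⟩
  · rw [mul_div_assoc', div_le_iff₀ (by positivity)]
    nlinarith [mul_nonneg (abs_nonneg c) (mul_pos hp hp).le]
  · rw [mul_div_assoc', div_le_iff₀ (by positivity)]
    nlinarith [mul_nonneg (abs_nonneg c) (mul_pos hp hq).le, mul_pos hq hq]

theorem Complex.isSelfAdjoint_ofReal (r : ℝ) : IsSelfAdjoint (r : ℂ) :=
  Complex.conj_ofReal r

section InnerProductSpace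

variable {E : Type*} [NormedAddCommGroup E] [InnerProductSpace ℂ E]

theorem Submodule.reflection_orthogonal_span_sub_apply {v w : E} (hnorm : ‖v‖ = ‖w‖)
    (hreal : conj ⟪v, w⟫_ℂ = ⟪v, w⟫_ℂ) : reflection (ℂ ∙ (v - w))ᗮ v = w := by
  set R := reflection (ℂ ∙ (v - w))ᗮ
  have hsub : R (v - w) = -(v - w) := reflection_orthogonalComplement_singleton_eq_neg (v - w)
  have hadd : R (v + w) = v + w := by
    refine reflection_mem_subspace_eq_self ((mem_orthogonal_singleton_iff_inner_right).2 ?_)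
    rw [inner_sub_left, inner_add_right, inner_add_right, inner_self_eq_norm_sq_to_K,
      inner_self_eq_norm_sq_to_K, hnorm, ← inner_conj_symm w v, hreal]
    ring
  have h2 : (2 : ℂ) • R v = (2 : ℂ) • w := by
    have := congrArg₂ (· + ·) hadd hsub
    simp only [map_sub, map_add] at this
    rw [two_smul, two_smul]
    linear_combination (norm := module) this
  exact smul_right_injective E two_ne_zero h2

theorem LinearIsometryEquiv.isSelfAdjoint_of_involutive [CompleteSpace E] (R : E ≃ₗᵢ[ℂ] E)
    (hR : Function.Involutive R) : IsSelfAdjoint (R : E →L[ℂ] E) := by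
  refine ContinuousLinearMap.isSelfAdjoint_iff_isSymmetric.2 fun y z => ?_
  change ⟪R y, z⟫_ℂ = ⟪y, R z⟫_ℂ
  conv_lhs => rw [← hR z]
  exact R.inner_map_map y (R z)

theorem exists_isSelfAdjoint_apply_eq [CompleteSpace E] {x : E} (hx : ‖x‖ = 1) (a : E)
    (ha : conj ⟪x, a⟫_ℂ = ⟪x, a⟫_ℂ) :
    ∃ H : E →L[ℂ] E, IsSelfAdjoint H ∧ H x = a ∧ ‖H‖ ≤ ‖a‖ := by
  -- reflecting `‖a‖ • x` onto `a`, rather than `x` onto `a / ‖a‖`, needs no case split at `a = 0`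
  set v : E := (‖a‖ : ℂ) • x
  have hv : ‖v‖ = ‖a‖ := by simp [v, norm_smul, hx]
  have hva : conj ⟪v, a⟫_ℂ = ⟪v, a⟫_ℂ := by simp [v, ha]
  set R : E ≃ₗᵢ[ℂ] E := Submodule.reflection (ℂ ∙ (v - a))ᗮ
  refine ⟨(‖a‖ : ℂ) • (R : E →L[ℂ] E), ?_, ?_, ?_⟩
  · exact (Complex.isSelfAdjoint_ofReal _).smul
      (R.isSelfAdjoint_of_involutive (Submodule.reflection_involutive _))
  · change (‖a‖ : ℂ) • R x = a
    rw [← map_smul]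
    exact Submodule.reflection_orthogonal_span_sub_apply hv hva
  · calc ‖(‖a‖ : ℂ) • (R : E →L[ℂ] E)‖ = ‖a‖ * ‖(R : E →L[ℂ] E)‖ := by simp [norm_smul]
      _ ≤ ‖a‖ * 1 := by gcongr; exact R.toLinearIsometry.norm_toContinuousLinearMap_le
      _ = ‖a‖ := mul_one _

theorem IsSelfAdjoint.conj_inner_apply_self [CompleteSpace E] {T : E →L[ℂ] E}
    (hT : IsSelfAdjoint T) (x : E) : conj ⟪x, T x⟫_ℂ = ⟪x, T x⟫_ℂ :=
  Complex.conj_eq_iff_im.2 (hT.isSymmetric.im_inner_self_apply x)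

theorem norm_add_le_sqrt_two_mul_of_inner_eq_zero {p q : E} (h : ⟪p, q⟫_ℂ = 0) {e : ℝ}
    (hp : ‖p‖ ≤ e) (hq : ‖q‖ ≤ e) : ‖p + q‖ ≤ √2 * e := by
  have he : 0 ≤ e := (norm_nonneg p).trans hp
  refine (mul_self_le_mul_self_iff (norm_nonneg _) (by positivity)).2 ?_
  rw [norm_add_sq_eq_norm_sq_add_norm_sq_of_inner_eq_zero p q h, mul_mul_mul_comm,
    Real.mul_self_sqrt zero_le_two]
  nlinarith [norm_nonneg p, norm_nonneg q]

theorem exists_residual_decomposition {x r : E} (hx : ‖x‖ = 1) {μ : ℝ} {β γ : ℂ}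
    (hxr : ⟪x, r⟫_ℂ = β - μ * γ) {η α κ : ℝ} (hα : 0 < α) (hκ : 0 ≤ κ)
    (hβ : ‖β‖ ≤ η * α) (hγ : ‖γ‖ ≤ η * κ) (hr : ‖r‖ ≤ η * (α + |μ| * κ)) :
    ∃ a c : E, ⟪x, a⟫_ℂ = -β ∧ ⟪x, c⟫_ℂ = -γ ∧ a - (μ : ℂ) • c = -r ∧
      ‖a‖ ≤ √2 * η * α ∧ ‖c‖ ≤ √2 * η * κ := by
  set D := α + |μ| * κ
  have hD : 0 < D := by positivity
  set w := r - ⟪x, r⟫_ℂ • x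
  have hxw : ⟪x, w⟫_ℂ = 0 := by simp [w, hx]
  have hw : ‖w‖ ≤ η * D := by
    have hpyth := norm_add_sq_eq_norm_sq_add_norm_sq_of_inner_eq_zero (⟪x, r⟫_ℂ • x) w
      (by rw [inner_smul_left, hxw, mul_zero])
    rw [add_sub_cancel] at hpyth
    nlinarith [norm_nonneg w, norm_nonneg (⟪x, r⟫_ℂ • x), norm_nonneg r]
  have hpart : ∀ (b : ℂ) (t e : ℝ), ‖b‖ ≤ η * e → |t| ≤ e / D →
      ‖-(b • x + (t : ℂ) • w)‖ ≤ √2 * η * e := by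
    intro b t e hb ht
    rw [norm_neg, mul_assoc]
    refine norm_add_le_sqrt_two_mul_of_inner_eq_zero ?_ (by simpa [norm_smul, hx] using hb) ?_
    · rw [inner_smul_left, inner_smul_right, hxw, mul_zero, mul_zero]
    · calc ‖(t : ℂ) • w‖ = |t| * ‖w‖ := by rw [norm_smul, Complex.norm_real, Real.norm_eq_abs]
        _ ≤ e / D * (η * D) := mul_le_mul ht hw (norm_nonneg w) ((abs_nonneg t).trans ht)
        _ = η * e := by field_simp
  have hsign : |(SignType.sign μ : ℝ)| ≤ 1 := by cases SignType.sign μ <;> norm_num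
  refine ⟨-(β • x + ((α / D : ℝ) : ℂ) • w),
    -(γ • x + ((-(SignType.sign μ * κ / D) : ℝ) : ℂ) • w), ?_, ?_, ?_, hpart _ _ _ hβ ?_,
    hpart _ _ _ hγ ?_⟩
  · simp [inner_smul_right, hx, hxw]
  · simp [inner_smul_right, hx, hxw]
  · have hcoef : ((α / D : ℝ) : ℂ) + μ * ((SignType.sign μ * κ / D : ℝ) : ℂ) = 1 := by
      rw [← Complex.ofReal_mul, ← Complex.ofReal_add, mul_div_assoc', ← mul_assoc, self_mul_sign,
        ← add_div, div_self hD.ne', Complex.ofReal_one]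
    have hr' : r = (β - μ * γ) • x + w := by rw [← hxr]; exact (add_sub_cancel _ _).symm
    rw [hr']
    linear_combination (norm := module) -hcoef • w
  · rw [abs_of_pos (by positivity)]
  · rw [abs_neg, abs_div, abs_mul, abs_of_nonneg hκ, abs_of_pos hD]
    gcongr
    exact mul_le_of_le_one_left hκ hsign

end InnerProductSpace

namespace ContinuousLinearMap

variable {E : Type*} [NormedAddCommGroup E] [InnerProductSpace ℂ E]

def IsIndefinite (T : E →L[ℂ] E) : Prop :=
  (∃ y, 0 < (⟪y, T y⟫_ℂ).re) ∧ ∃ z, (⟪z, T z⟫_ℂ).re < 0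

theorem re_inner_smul_apply_smul (T : E →L[ℂ] E) (c : ℂ) (x : E) :
    (⟪c • x, T (c • x)⟫_ℂ).re = ‖c‖ ^ 2 * (⟪x, T x⟫_ℂ).re := by
  rw [map_smul, inner_smul_left, inner_smul_right, ← mul_assoc, RCLike.conj_mul]
  norm_cast
  exact Complex.re_ofReal_mul _ _

theorem IsIndefinite.exists_norm_eq_one_inner_eq_zero {T : E →L[ℂ] E} (hT : T.IsIndefinite)
    {x : E} (hx : ‖x‖ = 1) : ∃ u, ‖u‖ = 1 ∧ ⟪x, u⟫_ℂ = 0 := by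
  by_contra! h
  have hline : ∀ y : E, y = ⟪x, y⟫_ℂ • x := by
    intro y
    by_contra hy
    have hw : y - ⟪x, y⟫_ℂ • x ≠ 0 := sub_ne_zero.2 hy
    refine h _ (norm_smul_inv_norm (𝕜 := ℂ) hw) ?_
    simp [hx]
  obtain ⟨⟨y, hy⟩, ⟨z, hz⟩⟩ := hT
  rw [hline y, re_inner_smul_apply_smul] at hy
  rw [hline z, re_inner_smul_apply_smul] at hz
  nlinarith [mul_nonneg (sq_nonneg ‖⟪x, y⟫_ℂ‖) (sq_nonneg ‖⟪x, z⟫_ℂ‖),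
    sq_nonneg (⟪x, T x⟫_ℂ).re]

theorem isIndefinite_of_re_inner_ne_zero [CompleteSpace E] {M : E →L[ℂ] E}
    (hM : IsSelfAdjoint M) {x u : E} (hx : (⟪x, M x⟫_ℂ).re = 0) (hu : (⟪x, M u⟫_ℂ).re ≠ 0) :
    M.IsIndefinite := by
  set b := (⟪x, M u⟫_ℂ).re
  set q := (⟪u, M u⟫_ℂ).re
  have hux : (⟪u, M x⟫_ℂ).re = b := by
    have hsymm := hM.isSymmetric u x
    rw [coe_coe] at hsymm
    rw [← hsymm, ← inner_conj_symm, Complex.conj_re]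
  have hquad : ∀ s : ℝ, (⟪x + (s : ℂ) • u, M (x + (s : ℂ) • u)⟫_ℂ).re = s * (2 * b + s * q) := by
    intro s
    simp only [map_add, map_smul, inner_add_left, inner_add_right, inner_smul_left,
      inner_smul_right, Complex.add_re, Complex.conj_ofReal, Complex.re_ofReal_mul, hx, hux]
    ring
  set k := |q| + 1
  have hk : 0 < k := by positivity
  have hb : 0 < b ^ 2 := by positivity
  -- for `s = ±b / k` the linear term `2 b s` dominates `q s²`
  refine ⟨⟨x + ((b / k : ℝ) : ℂ) • u, ?_⟩, ⟨x + ((-(b / k) : ℝ) : ℂ) • u, ?_⟩⟩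
  · rw [hquad, show b / k * (2 * b + b / k * q) = b ^ 2 * (2 * k + q) / k ^ 2 by field_simp]
    have : 0 < 2 * k + q := by simp only [k]; linarith [neg_abs_le q]
    positivity
  · rw [hquad, show -(b / k) * (2 * b + -(b / k) * q) = -(b ^ 2 * (2 * k - q) / k ^ 2) by
      field_simp; ring]
    have : 0 < 2 * k - q := by simp only [k]; linarith [le_abs_self q]
    have : 0 < b ^ 2 * (2 * k - q) / k ^ 2 := by positivity
    linarith

theorem exists_isSelfAdjoint_swap [CompleteSpace E] {x u : E} (hx : ‖x‖ = 1) (hu : ‖u‖ = 1)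
    (hxu : ⟪x, u⟫_ℂ = 0) : ∃ G : E →L[ℂ] E, IsSelfAdjoint G ∧ G x = u ∧ G u = x ∧ ‖G‖ ≤ 2 := by
  have hux : ⟪u, x⟫_ℂ = 0 := by rw [← inner_conj_symm, hxu, map_zero]
  refine ⟨InnerProductSpace.rankOne ℂ x u + InnerProductSpace.rankOne ℂ u x, ?_, ?_, ?_, ?_⟩
  · simp [IsSelfAdjoint, star_eq_adjoint, add_comm]
  · simp [hux, hx]
  · simp [hxu, hu]
  · refine (norm_add_le _ _).trans ?_
    rw [InnerProductSpace.norm_rankOne, InnerProductSpace.norm_rankOne, hx, hu]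
    norm_num

theorem exists_isIndefinite_add_smul [CompleteSpace E] {M G : E →L[ℂ] E} (hM : IsSelfAdjoint M)
    (hG : IsSelfAdjoint G) {x u : E} (hx : ‖x‖ = 1) (hxu : ⟪x, u⟫_ℂ = 0) (hGx : G x = u)
    (hGu : G u = x) (hMx : ⟪x, M x⟫_ℂ = 0) {t : ℝ} (ht : 0 < t) :
    ∃ τ : ℝ, 0 ≤ τ ∧ τ ≤ t ∧ (M + (τ : ℂ) • G).IsIndefinite := by
  set b := (⟪x, M u⟫_ℂ).re
  obtain ⟨τ, hτ0, hτt, hbτ⟩ : ∃ τ : ℝ, 0 ≤ τ ∧ τ ≤ t ∧ b + τ ≠ 0 := by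
    by_cases hb : b = 0
    · exact ⟨t, ht.le, le_rfl, by rw [hb, zero_add]; exact ht.ne'⟩
    · exact ⟨0, le_rfl, ht.le, by rwa [add_zero]⟩
  have hxx : ⟪x, x⟫_ℂ = 1 := by simp [hx]
  refine ⟨τ, hτ0, hτt, isIndefinite_of_re_inner_ne_zero
    (hM.add ((Complex.isSelfAdjoint_ofReal τ).smul hG)) (x := x) (u := u) ?_ ?_⟩
  · rw [add_apply, inner_add_right, hMx, smul_apply, hGx, inner_smul_right, hxu, mul_zero,
      add_zero, Complex.zero_re]
  · rwa [add_apply, inner_add_right, smul_apply, hGu, inner_smul_right, hxx, mul_one,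
      Complex.add_re, Complex.ofReal_re]

-- In the paper's notation, `η = sInf (backwardErrorLevels A C μ lam x)` and
-- `η₁ = backwardErrorEstimate A C μ lam x`.
def Is2DEigentriplet (A C : E →L[ℂ] E) (μ lam : ℝ) (x : E) : Prop :=
  (A - (μ : ℂ) • C) x = (lam : ℂ) • x ∧ ⟪x, C x⟫_ℂ = 0 ∧ ‖x‖ = 1

def backwardErrorLevels [CompleteSpace E] (A C : E →L[ℂ] E) (μ lam : ℝ) (x : E) : Set ℝ :=
  {ε | ∃ δA δC : E →L[ℂ] E, IsSelfAdjoint δA ∧ IsSelfAdjoint δC ∧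
    ‖δA‖ ≤ ε * ‖A‖ ∧ ‖δC‖ ≤ ε * ‖C‖ ∧ (C + δC).IsIndefinite ∧
    Is2DEigentriplet (A + δA) (C + δC) μ lam x}

noncomputable def backwardErrorEstimate (A C : E →L[ℂ] E) (μ lam : ℝ) (x : E) : ℝ :=
  max (max (‖⟪x, A x⟫_ℂ - lam‖ / ‖A‖) (‖⟪x, C x⟫_ℂ‖ / ‖C‖))
    (‖(A - (μ : ℂ) • C - (lam : ℂ) • 1) x‖ / (‖A‖ + |μ| * ‖C‖))

variable [CompleteSpace E] {A C : E →L[ℂ] E} {μ lam : ℝ} {x : E}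

theorem backwardErrorEstimate_le_of_mem (hA0 : A ≠ 0) (hC0 : C ≠ 0) {ε : ℝ}
    (hε : ε ∈ backwardErrorLevels A C μ lam x) : backwardErrorEstimate A C μ lam x ≤ ε := by
  obtain ⟨δA, δC, -, -, hnA, hnC, -, heig, horth, hx⟩ := hε
  have hAp : 0 < ‖A‖ := norm_pos_iff.2 hA0
  have hCp : 0 < ‖C‖ := norm_pos_iff.2 hC0
  have hxx : ⟪x, x⟫_ℂ = 1 := by simp [hx]
  have happly : ∀ T : E →L[ℂ] E, ‖T x‖ ≤ ‖T‖ := fun T => by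
    simpa [hx] using T.le_opNorm x
  have hinner : ∀ T : E →L[ℂ] E, ‖⟪x, T x⟫_ℂ‖ ≤ ‖T‖ := fun T =>
    (norm_inner_le_norm x (T x)).trans (by rw [hx, one_mul]; exact happly T)
  have hCx : ⟪x, C x⟫_ℂ = -⟪x, δC x⟫_ℂ := by
    rw [add_apply, inner_add_right] at horth
    linear_combination horth
  have hAx : ⟪x, A x⟫_ℂ - lam = -⟪x, δA x⟫_ℂ := by
    have h := congrArg (⟪x, ·⟫_ℂ) heig
    simp only [sub_apply, add_apply, smul_apply, inner_sub_right, inner_add_right,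
      inner_smul_right, hxx] at h horth
    linear_combination h + (μ : ℂ) * horth
  have hr : (A - (μ : ℂ) • C - (lam : ℂ) • 1) x = -(δA x - (μ : ℂ) • δC x) := by
    simp only [sub_apply, add_apply, smul_apply, one_apply_eq_self] at heig ⊢
    linear_combination (norm := module) heig
  refine max_le (max_le ?_ ?_) ?_
  · rw [div_le_iff₀ hAp, hAx, norm_neg]
    exact (hinner δA).trans hnA
  · rw [div_le_iff₀ hCp, hCx, norm_neg]
    exact (hinner δC).trans hnC
  · rw [div_le_iff₀ (by positivity), hr, norm_neg]
    calc ‖δA x - (μ : ℂ) • δC x‖ ≤ ‖δA x‖ + |μ| * ‖δC x‖ := by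
          simpa [norm_smul] using norm_sub_le (δA x) ((μ : ℂ) • δC x)
      _ ≤ ε * ‖A‖ + |μ| * (ε * ‖C‖) := by
          gcongr
          exacts [(happly δA).trans hnA, (happly δC).trans hnC]
      _ = ε * (‖A‖ + |μ| * ‖C‖) := by ring

theorem exists_perturbation_le_sqrt_two_mul_backwardErrorEstimate (hA : IsSelfAdjoint A)
    (hC : IsSelfAdjoint C) (hA0 : A ≠ 0) (hC0 : C ≠ 0) (hx : ‖x‖ = 1) :
    ∃ HA HC : E →L[ℂ] E, IsSelfAdjoint HA ∧ IsSelfAdjoint HC ∧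
      ‖HA‖ ≤ √2 * backwardErrorEstimate A C μ lam x * ‖A‖ ∧
      ‖HC‖ ≤ √2 * backwardErrorEstimate A C μ lam x * ‖C‖ ∧
      Is2DEigentriplet (A + HA) (C + HC) μ lam x := by
  set η := backwardErrorEstimate A C μ lam x
  have hAp : 0 < ‖A‖ := norm_pos_iff.2 hA0
  have hCp : 0 < ‖C‖ := norm_pos_iff.2 hC0
  have hβ : ‖⟪x, A x⟫_ℂ - lam‖ ≤ η * ‖A‖ :=
    (div_le_iff₀ hAp).1 ((le_max_left _ _).trans (le_max_left _ _))
  have hγ : ‖⟪x, C x⟫_ℂ‖ ≤ η * ‖C‖ :=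
    (div_le_iff₀ hCp).1 ((le_max_right _ _).trans (le_max_left _ _))
  have hr : ‖(A - (μ : ℂ) • C - (lam : ℂ) • 1) x‖ ≤ η * (‖A‖ + |μ| * ‖C‖) :=
    (div_le_iff₀ (by positivity)).1 (le_max_right _ _)
  have hxr : ⟪x, (A - (μ : ℂ) • C - (lam : ℂ) • 1) x⟫_ℂ = (⟪x, A x⟫_ℂ - lam) - μ * ⟪x, C x⟫_ℂ := by
    have hxx : ⟪x, x⟫_ℂ = 1 := by simp [hx]
    simp only [sub_apply, smul_apply, one_apply_eq_self, inner_sub_right, inner_smul_right, hxx]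
    ring
  obtain ⟨a, c, hxa, hxc, hac, ha, hc⟩ :=
    exists_residual_decomposition hx hxr hAp hCp.le hβ hγ hr
  obtain ⟨HA, hHA, hHAx, hHAn⟩ := exists_isSelfAdjoint_apply_eq hx a
    (by rw [hxa, map_neg, map_sub, hA.conj_inner_apply_self, Complex.conj_ofReal])
  obtain ⟨HC, hHC, hHCx, hHCn⟩ := exists_isSelfAdjoint_apply_eq hx c
    (by rw [hxc, map_neg, hC.conj_inner_apply_self])
  refine ⟨HA, HC, hHA, hHC, hHAn.trans ha, hHCn.trans hc, ?_, ?_, hx⟩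
  · simp only [sub_apply, add_apply, smul_apply, one_apply_eq_self] at hac ⊢
    rw [hHAx, hHCx]
    linear_combination (norm := module) hac
  · rw [add_apply, inner_add_right, hHCx, hxc, add_neg_cancel]

theorem add_mem_backwardErrorLevels (hC : IsSelfAdjoint C) (hA0 : A ≠ 0) (hC0 : C ≠ 0)
    (hCind : C.IsIndefinite) {HA HC : E →L[ℂ] E} (hHA : IsSelfAdjoint HA)
    (hHC : IsSelfAdjoint HC) {s : ℝ} (hnA : ‖HA‖ ≤ s * ‖A‖) (hnC : ‖HC‖ ≤ s * ‖C‖)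
    (htrip : Is2DEigentriplet (A + HA) (C + HC) μ lam x) {δ : ℝ} (hδ : 0 < δ) :
    s + δ ∈ backwardErrorLevels A C μ lam x := by
  obtain ⟨heig, horth, hx⟩ := htrip
  obtain ⟨u, hu, hxu⟩ := hCind.exists_norm_eq_one_inner_eq_zero hx
  obtain ⟨G, hG, hGx, hGu, hGn⟩ := exists_isSelfAdjoint_swap hx hu hxu
  have hAp : 0 < ‖A‖ := norm_pos_iff.2 hA0
  have hCp : 0 < ‖C‖ := norm_pos_iff.2 hC0
  obtain ⟨t, ht, h2t, h2μt⟩ := exists_pos_two_mul_le (mul_pos hδ hCp) (mul_pos hδ hAp) μ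
  obtain ⟨τ, hτ0, hτt, hind⟩ :=
    exists_isIndefinite_add_smul (hC.add hHC) hG hx hxu hGx hGu horth ht
  refine ⟨HA + ((μ * τ : ℝ) : ℂ) • G, HC + (τ : ℂ) • G,
    hHA.add ((Complex.isSelfAdjoint_ofReal _).smul hG),
    hHC.add ((Complex.isSelfAdjoint_ofReal τ).smul hG), ?_, ?_, by rwa [← add_assoc], ?_, ?_, hx⟩
  · calc ‖HA + ((μ * τ : ℝ) : ℂ) • G‖ ≤ s * ‖A‖ + |μ| * τ * 2 := by
          refine (norm_add_le _ _).trans (add_le_add hnA ?_)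
          rw [norm_smul, Complex.norm_real, Real.norm_eq_abs, abs_mul, abs_of_nonneg hτ0]
          gcongr
      _ ≤ (s + δ) * ‖A‖ := by nlinarith [abs_nonneg μ]
  · calc ‖HC + (τ : ℂ) • G‖ ≤ s * ‖C‖ + τ * 2 := by
          refine (norm_add_le _ _).trans (add_le_add hnC ?_)
          rw [norm_smul, Complex.norm_real, Real.norm_eq_abs, abs_of_nonneg hτ0]
          gcongr
      _ ≤ (s + δ) * ‖C‖ := by nlinarith
  · simp only [sub_apply, add_apply, smul_apply] at heig ⊢
    push_cast
    linear_combination (norm := module) heig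
  · rw [← add_assoc, add_apply, inner_add_right, horth, smul_apply, hGx, inner_smul_right, hxu,
      mul_zero, add_zero]

theorem backwardErrorEstimate_le_sInf_and_sInf_le (hA : IsSelfAdjoint A) (hC : IsSelfAdjoint C)
    (hA0 : A ≠ 0) (hC0 : C ≠ 0) (hCind : C.IsIndefinite) (hx : ‖x‖ = 1) :
    backwardErrorEstimate A C μ lam x ≤ sInf (backwardErrorLevels A C μ lam x) ∧
      sInf (backwardErrorLevels A C μ lam x) ≤ √2 * backwardErrorEstimate A C μ lam x := by
  have hmem : ∀ δ > 0, √2 * backwardErrorEstimate A C μ lam x + δ ∈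
      backwardErrorLevels A C μ lam x := fun δ hδ => by
    obtain ⟨HA, HC, hHA, hHC, hnA, hnC, htrip⟩ :=
      exists_perturbation_le_sqrt_two_mul_backwardErrorEstimate (μ := μ) (lam := lam)
        hA hC hA0 hC0 hx
    exact add_mem_backwardErrorLevels hC hA0 hC0 hCind hHA hHC hnA hnC htrip hδ
  have hlower := fun ε (hε : ε ∈ backwardErrorLevels A C μ lam x) =>
    backwardErrorEstimate_le_of_mem hA0 hC0 hε
  exact ⟨le_csInf ⟨_, hmem 1 one_pos⟩ hlower,
    le_of_forall_pos_le_add fun δ hδ => csInf_le ⟨_, hlower⟩ (hmem δ hδ)⟩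

end ContinuousLinearMap

namespace Matrix

variable {n : Type*} [Fintype n]

theorem star_dotProduct_self_eq_one_iff {x : n → ℂ} :
    star x ⬝ᵥ x = 1 ↔ ‖WithLp.toLp 2 x‖ = 1 := by
  rw [dotProduct_comm, ← EuclideanSpace.inner_toLp_toLp, inner_self_eq_norm_sq_to_K,
    ← RCLike.ofReal_pow, ← RCLike.ofReal_one, RCLike.ofReal_inj]
  exact pow_eq_one_iff_of_nonneg (norm_nonneg _) two_ne_zero

variable [DecidableEq n]

local notation "T" => toEuclideanCLM (n := n) (𝕜 := ℂ)

theorem star_dotProduct_mulVec_eq_inner (M : Matrix n n ℂ) (x y : n → ℂ) :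
    star x ⬝ᵥ M *ᵥ y = ⟪WithLp.toLp 2 x, T M (WithLp.toLp 2 y)⟫_ℂ := by
  rw [toEuclideanCLM_toLp, EuclideanSpace.inner_toLp_toLp, dotProduct_comm]

theorem isHermitian_iff_isSelfAdjoint_toEuclideanCLM {M : Matrix n n ℂ} :
    M.IsHermitian ↔ IsSelfAdjoint (T M) := by
  rw [isHermitian_iff_isSelfAdjoint, IsSelfAdjoint, IsSelfAdjoint, ← map_star]
  exact (EquivLike.injective T).eq_iff.symm

theorem isIndefinite_iff_toEuclideanCLM {M : Matrix n n ℂ} :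
    IsIndefinite M ↔ (T M).IsIndefinite := by
  simp only [IsIndefinite, ContinuousLinearMap.IsIndefinite, star_dotProduct_mulVec_eq_inner,
    (WithLp.toLp_surjective 2).exists]

theorem is2DEigentriplet_iff_toEuclideanCLM {A C : Matrix n n ℂ} {μ lam : ℝ} {x : n → ℂ} :
    Is2DEigentriplet A C μ lam x ↔ (T A).Is2DEigentriplet (T C) μ lam (WithLp.toLp 2 x) := by
  simp only [Is2DEigentriplet, ContinuousLinearMap.Is2DEigentriplet,
    star_dotProduct_mulVec_eq_inner, star_dotProduct_self_eq_one_iff]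
  rw [← (WithLp.toLp_injective 2).eq_iff, ← toEuclideanCLM_toLp, WithLp.toLp_smul, map_sub,
    map_smul]

theorem setOf_isHermitian_perturbation_eq_backwardErrorLevels (A C : Matrix n n ℂ) (μ lam : ℝ)
    (x : n → ℂ) :
    {ε : ℝ | ∃ δA δC : Matrix n n ℂ,
        δA.IsHermitian ∧ δC.IsHermitian ∧
        specNorm δA ≤ ε * specNorm A ∧ specNorm δC ≤ ε * specNorm C ∧
        IsIndefinite (C + δC) ∧
        Is2DEigentriplet (A + δA) (C + δC) μ lam x} =
      (T A).backwardErrorLevels (T C) μ lam (WithLp.toLp 2 x) := by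
  ext ε
  simp only [ContinuousLinearMap.backwardErrorLevels,
    (T).surjective.exists, isHermitian_iff_isSelfAdjoint_toEuclideanCLM,
    isIndefinite_iff_toEuclideanCLM, is2DEigentriplet_iff_toEuclideanCLM, map_add]
  rfl

theorem backwardErrorEstimate_toEuclideanCLM (A C : Matrix n n ℂ) (μ lam : ℝ) (x : n → ℂ) :
    (T A).backwardErrorEstimate (T C) μ lam (WithLp.toLp 2 x) =
      max (max
        (‖star x ⬝ᵥ A.mulVec x - (lam : ℂ)‖ / specNorm A)
        (‖star x ⬝ᵥ C.mulVec x‖ / specNorm C))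
      (vecNorm ((A - (μ : ℂ) • C - (lam : ℂ) • 1).mulVec x) /
        (specNorm A + |μ| * specNorm C)) := by
  have hres : T A - (μ : ℂ) • T C - (lam : ℂ) • 1 = T (A - (μ : ℂ) • C - (lam : ℂ) • 1) := by
    rw [map_sub, map_sub, map_smul, map_smul, map_one]
  rw [ContinuousLinearMap.backwardErrorEstimate, hres, ← star_dotProduct_mulVec_eq_inner,
    ← star_dotProduct_mulVec_eq_inner]
  rfl

end Matrix

/-- the backward error `η` (infimum of admissible
perturbation levels) satisfies `η₁ ≤ η ≤ √2 η₁`. -/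
theorem stmt3 {n : Type*} [Fintype n] [DecidableEq n]
    (A C : Matrix n n ℂ) (hA : A.IsHermitian) (hC : C.IsHermitian)
    (hA0 : A ≠ 0) (hC0 : C ≠ 0) (hCind : IsIndefinite C)
    (μ lam : ℝ) (x : n → ℂ) (hx : star x ⬝ᵥ x = 1)
    (η η₁ : ℝ)
    (hη : η = sInf {ε : ℝ | ∃ δA δC : Matrix n n ℂ,
        δA.IsHermitian ∧ δC.IsHermitian ∧
        specNorm δA ≤ ε * specNorm A ∧ specNorm δC ≤ ε * specNorm C ∧
        IsIndefinite (C + δC) ∧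
        Is2DEigentriplet (A + δA) (C + δC) μ lam x})
    (hη₁ : η₁ = max (max
        (‖star x ⬝ᵥ A.mulVec x - (lam : ℂ)‖ / specNorm A)
        (‖star x ⬝ᵥ C.mulVec x‖ / specNorm C))
      (vecNorm ((A - (μ : ℂ) • C - (lam : ℂ) • 1).mulVec x) /
        (specNorm A + |μ| * specNorm C))) :
    η₁ ≤ η ∧ η ≤ Real.sqrt 2 * η₁ := by
  rw [hη, hη₁, Matrix.setOf_isHermitian_perturbation_eq_backwardErrorLevels,
    ← Matrix.backwardErrorEstimate_toEuclideanCLM]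
  exact ContinuousLinearMap.backwardErrorEstimate_le_sInf_and_sInf_le
    (Matrix.isHermitian_iff_isSelfAdjoint_toEuclideanCLM.1 hA)
    (Matrix.isHermitian_iff_isSelfAdjoint_toEuclideanCLM.1 hC)
    ((map_ne_zero_iff _ (EquivLike.injective _)).2 hA0)
    ((map_ne_zero_iff _ (EquivLike.injective _)).2 hC0)
    (Matrix.isIndefinite_iff_toEuclideanCLM.1 hCind) (Matrix.star_dotProduct_self_eq_one_iff.1 hx)
end

section
/- Let Â be a stable matrix with distance to instability β(Â), and let F be a matrix with β̂ ≡ β(Â) − ‖F‖ > 0 such that Â + F + (E_β − F) is unstable where E_β attains ‖E_β‖ = β(Â) and Â + E_β is unstable, and F = ((β(Â) − β̂)/β(Â)) E_β. Then β(Â + F) = β̂. -/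
open scoped Matrix

/-- A matrix is unstable if it has an eigenvalue with nonnegative real part. -/
def Unstable {m : Type*} [Fintype m] [DecidableEq m]
    (M : Matrix m m ℂ) : Prop :=
  ∃ z ∈ spectrum ℂ M, 0 ≤ z.re

/-- The distance to instability in the spectral norm. -/
noncomputable def dti {m : Type*} [Fintype m] [DecidableEq m]
    (M : Matrix m m ℂ) : ℝ :=
  sInf {t : ℝ | ∃ E : Matrix m m ℂ, specNorm E = t ∧ Unstable (M + E)}


/-!
Scaling a minimal destabilizing perturbation `E` by `s ∈ [0, 1]` moves `M` along a
segment towards instability: `(1 - s) • E` still destabilizes `M + s • E`, and by the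
triangle inequality nothing smaller can, since `s • E + E'` would then destabilize `M`
with norm below `dti M`.
-/

section SpecNorm

variable {n : Type*} [Fintype n] [DecidableEq n]

lemma specNorm_nonneg (M : Matrix n n ℂ) : 0 ≤ specNorm M := norm_nonneg _

lemma specNorm_smul (c : ℂ) (M : Matrix n n ℂ) : specNorm (c • M) = ‖c‖ * specNorm M := by
  unfold specNorm
  rw [map_smul]
  exact norm_smul c _

lemma specNorm_ofReal_smul {r : ℝ} (hr : 0 ≤ r) (M : Matrix n n ℂ) :
    specNorm ((r : ℂ) • M) = r * specNorm M := by
  rw [specNorm_smul, Complex.norm_real, Real.norm_of_nonneg hr]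

lemma specNorm_add_le (M N : Matrix n n ℂ) : specNorm (M + N) ≤ specNorm M + specNorm N := by
  unfold specNorm
  rw [map_add]
  exact norm_add_le _ _

end SpecNorm

section DistanceToInstability

variable {m : Type*} [Fintype m] [DecidableEq m]

lemma dti_le_specNorm {M E : Matrix m m ℂ} (h : Unstable (M + E)) : dti M ≤ specNorm E :=
  csInf_le ⟨0, fun _ ⟨E', hE', _⟩ => hE' ▸ specNorm_nonneg E'⟩ ⟨E, rfl, h⟩

lemma le_dti {M : Matrix m m ℂ} {t : ℝ} (hne : ∃ E, Unstable (M + E))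
    (h : ∀ E, Unstable (M + E) → t ≤ specNorm E) : t ≤ dti M := by
  obtain ⟨E, hE⟩ := hne
  exact le_csInf ⟨_, E, rfl, hE⟩ fun _ ⟨E', hE', hun⟩ => hE' ▸ h E' hun

lemma dti_sub_specNorm_le_dti_add {M F : Matrix m m ℂ} (hne : ∃ E, Unstable (M + F + E)) :
    dti M - specNorm F ≤ dti (M + F) := by
  refine le_dti hne fun E hE => ?_
  have hM : dti M ≤ specNorm (F + E) := dti_le_specNorm (by rwa [← add_assoc])
  linarith [specNorm_add_le F E]

lemma dti_add_smul_of_attains {M E : Matrix m m ℂ} (hE : specNorm E = dti M)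
    (hun : Unstable (M + E)) {s : ℝ} (hs₀ : 0 ≤ s) (hs₁ : s ≤ 1) :
    dti (M + (s : ℂ) • E) = (1 - s) * dti M := by
  have hrest : Unstable (M + (s : ℂ) • E + ((1 - s : ℝ) : ℂ) • E) := by
    rwa [add_assoc, ← add_smul, Complex.ofReal_sub, Complex.ofReal_one, add_sub_cancel,
      one_smul]
  have hupper : dti (M + (s : ℂ) • E) ≤ (1 - s) * dti M := by
    simpa only [specNorm_ofReal_smul (sub_nonneg.2 hs₁), hE] using dti_le_specNorm hrest
  have hlower := dti_sub_specNorm_le_dti_add (M := M) (F := (s : ℂ) • E) ⟨_, hrest⟩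
  rw [specNorm_ofReal_smul hs₀, hE] at hlower
  linarith

end DistanceToInstability

theorem stmt9_general {m : Type*} [Fintype m] [DecidableEq m]
    (Ah Eβ : Matrix m m ℂ)
    (hE : specNorm Eβ = dti Ah) (hEun : Unstable (Ah + Eβ))
    (βh : ℝ) (hβpos : 0 < βh) (hβ : βh < dti Ah)
    (F : Matrix m m ℂ)
    (hF : F = (((dti Ah - βh) / dti Ah : ℝ) : ℂ) • Eβ) :
    dti (Ah + F) = βh := by
  have hdti : 0 < dti Ah := hβpos.trans hβ
  rw [hF, dti_add_smul_of_attains hE hEun (div_nonneg (by linarith) hdti.le)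
    ((div_le_one hdti).2 (by linarith))]
  field_simp
  ring

/-- with `E_β` attaining `‖E_β‖ = β(Â)` and `Â + E_β` unstable,
and `F = ((β(Â) − β̂)/β(Â)) E_β` for `0 < β̂ < β(Â)`, one has
`β(Â + F) = β̂`. -/
theorem stmt9 {m : Type*} [Fintype m] [DecidableEq m]
    (Ah Eβ : Matrix m m ℂ) (hstab : ¬ Unstable Ah)
    (hE : specNorm Eβ = dti Ah) (hEun : Unstable (Ah + Eβ))
    (βh : ℝ) (hβpos : 0 < βh) (hβ : βh < dti Ah)
    (F : Matrix m m ℂ)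
    (hF : F = (((dti Ah - βh) / dti Ah : ℝ) : ℂ) • Eβ) :
    dti (Ah + F) = βh :=
  stmt9_general Ah Eβ hE hEun βh hβpos hβ F hF
end

section
/- Let Â ∈ ℂ^{m×m}, and set A = [[0, Â],[Âᴴ, 0]] and C = [[0, iI],[−iI, 0]] (both 2m×2m Hermitian). Suppose (μ*, λ*, x*) is a 2D-eigentriplet of (A, C) with λ* ≠ 0 and x* = [x₁; x₂]. Then x₁ᴴx₁ = x₂ᴴx₂ = 1/2 and Im(x₁ᴴx₂) = 0. -/
open scoped Matrix

/-!
Writing `J = diag(I, -I)`, the Hermitian matrix `H = A - μ C` is block off-diagonal, so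
`J H = -H J`. If `H x = λ x` with `λ` real, then `xᴴ J H x` equals both `λ xᴴ J x` and
`-λ xᴴ J x`, hence `xᴴ J x = x₁ᴴx₁ - x₂ᴴx₂ = 0` when `λ ≠ 0`; with `xᴴx = 1` this gives
`x₁ᴴx₁ = x₂ᴴx₂ = 1/2`. The constraint `xᴴ C x = i (x₁ᴴx₂ - x₂ᴴx₁) = -2 Im(x₁ᴴx₂)` gives the rest.
-/

open Matrix

theorem Matrix.IsHermitian.dotProduct_mulVec_eq_zero_of_anticomm {n 𝕜 : Type*} [Fintype n]
    [RCLike 𝕜] {H J : Matrix n n 𝕜} (hH : H.IsHermitian) (hJH : J * H = -(H * J))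
    {lam : ℝ} (hlam : lam ≠ 0) {x : n → 𝕜} (hx : H *ᵥ x = (lam : 𝕜) • x) :
    star x ⬝ᵥ J *ᵥ x = 0 := by
  have hleft : star x ⬝ᵥ (J * H) *ᵥ x = lam * (star x ⬝ᵥ J *ᵥ x) := by
    rw [← mulVec_mulVec, hx, mulVec_smul, dotProduct_smul, smul_eq_mul]
  have hright : star x ⬝ᵥ (H * J) *ᵥ x = lam * (star x ⬝ᵥ J *ᵥ x) := by
    rw [← mulVec_mulVec, dotProduct_mulVec, ← hH.eq, ← star_mulVec, hx, star_smul,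
      RCLike.star_def, RCLike.conj_ofReal, smul_dotProduct, smul_eq_mul]
  have htwice : (2 * lam : 𝕜) * (star x ⬝ᵥ J *ᵥ x) = 0 := by
    rw [hJH, neg_mulVec, dotProduct_neg, hright] at hleft
    linear_combination -hleft
  simpa [hlam] using htwice

theorem Matrix.fromBlocks_one_zero_zero_neg_one_mul_anticomm {m n R : Type*} [Fintype m]
    [Fintype n] [DecidableEq m] [DecidableEq n] [Ring R] (B : Matrix m n R) (C : Matrix n m R) :
    fromBlocks 1 0 0 (-1) * fromBlocks 0 B C 0 = -(fromBlocks 0 B C 0 * fromBlocks 1 0 0 (-1)) := by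
  simp [fromBlocks_multiply, fromBlocks_neg]

theorem Matrix.star_sumElim_dotProduct_fromBlocks_one_zero_zero_neg_one_mulVec {m n R : Type*}
    [Fintype m] [Fintype n] [DecidableEq m] [DecidableEq n] [CommRing R] [StarRing R]
    (x₁ : m → R) (x₂ : n → R) :
    star (Sum.elim x₁ x₂) ⬝ᵥ fromBlocks 1 0 0 (-1) *ᵥ Sum.elim x₁ x₂ =
      star x₁ ⬝ᵥ x₁ - star x₂ ⬝ᵥ x₂ := by
  simp [fromBlocks_mulVec, Function.star_sumElim, sumElim_dotProduct_sumElim, neg_mulVec,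
    sub_eq_add_neg]

theorem Matrix.star_sumElim_dotProduct_sumElim {m n R : Type*} [Fintype m] [Fintype n]
    [CommRing R] [StarRing R] (x₁ : m → R) (x₂ : n → R) :
    star (Sum.elim x₁ x₂) ⬝ᵥ Sum.elim x₁ x₂ = star x₁ ⬝ᵥ x₁ + star x₂ ⬝ᵥ x₂ := by
  rw [Function.star_sumElim, sumElim_dotProduct_sumElim]

theorem star_sumElim_dotProduct_fromBlocks_I_mulVec {m : Type*} [Fintype m] [DecidableEq m]
    (x₁ x₂ : m → ℂ) :
    star (Sum.elim x₁ x₂) ⬝ᵥ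
        fromBlocks 0 (Complex.I • (1 : Matrix m m ℂ)) (-(Complex.I) • (1 : Matrix m m ℂ)) 0 *ᵥ
          Sum.elim x₁ x₂ = -2 * ((star x₁ ⬝ᵥ x₂).im : ℂ) := by
  have hswap : star x₂ ⬝ᵥ x₁ = starRingEnd ℂ (star x₁ ⬝ᵥ x₂) := by
    rw [← RCLike.star_def, star_dotProduct]
  simp only [fromBlocks_mulVec, zero_mulVec, smul_mulVec, one_mulVec, add_zero, zero_add,
    Sum.elim_comp_inl, Sum.elim_comp_inr, Function.star_sumElim, sumElim_dotProduct_sumElim,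
    dotProduct_smul, smul_eq_mul, hswap]
  have hsub := Complex.sub_conj (star x₁ ⬝ᵥ x₂)
  push_cast at hsub
  linear_combination Complex.I * hsub + 2 * ((star x₁ ⬝ᵥ x₂).im : ℂ) * Complex.I_sq

theorem fromBlocks_sub_smul_fromBlocks_I_eq {m : Type*} [Fintype m] [DecidableEq m]
    (Ah : Matrix m m ℂ) (μ : ℝ) :
    fromBlocks 0 Ah Ahᴴ 0 -
        (μ : ℂ) • fromBlocks 0 (Complex.I • (1 : Matrix m m ℂ)) (-(Complex.I) • 1) 0 =
      fromBlocks 0 (Ah - ((μ : ℂ) * Complex.I) • 1) (Ah - ((μ : ℂ) * Complex.I) • 1)ᴴ 0 := by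
  rw [sub_eq_add_neg, fromBlocks_smul, fromBlocks_neg, fromBlocks_add]
  simp [smul_smul, sub_eq_add_neg]

/-- for the DTI block pair `A = [[0, Â],[Âᴴ, 0]]`,
`C = [[0, iI],[−iI, 0]]`, any 2D-eigentriplet `(μ*, λ*, [x₁; x₂])` with
`λ* ≠ 0` satisfies `x₁ᴴx₁ = x₂ᴴx₂ = 1/2` and `Im(x₁ᴴx₂) = 0`. -/
theorem stmt10 {m : Type*} [Fintype m] [DecidableEq m]
    (Ah : Matrix m m ℂ) (μ lam : ℝ) (hlam : lam ≠ 0)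
    (x₁ x₂ : m → ℂ)
    (ht : Is2DEigentriplet
      (Matrix.fromBlocks 0 Ah Ah.conjTranspose 0)
      (Matrix.fromBlocks 0 (Complex.I • (1 : Matrix m m ℂ))
        (-(Complex.I) • (1 : Matrix m m ℂ)) 0)
      μ lam (Sum.elim x₁ x₂)) :
    star x₁ ⬝ᵥ x₁ = 1 / 2 ∧ star x₂ ⬝ᵥ x₂ = 1 / 2 ∧
      (star x₁ ⬝ᵥ x₂).im = 0 := by
  obtain ⟨heig, hconstraint, hnorm⟩ := ht
  rw [fromBlocks_sub_smul_fromBlocks_I_eq] at heig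
  have hbalance := (IsHermitian.fromBlocks isHermitian_zero rfl isHermitian_zero)
    |>.dotProduct_mulVec_eq_zero_of_anticomm (fromBlocks_one_zero_zero_neg_one_mul_anticomm _ _)
      hlam heig
  rw [star_sumElim_dotProduct_fromBlocks_one_zero_zero_neg_one_mulVec] at hbalance
  rw [star_sumElim_dotProduct_sumElim] at hnorm
  rw [star_sumElim_dotProduct_fromBlocks_I_mulVec] at hconstraint
  exact ⟨by linear_combination (hnorm + hbalance) / 2,
    by linear_combination (hnorm - hbalance) / 2, by simpa using hconstraint⟩
end

section
/- Let A_k, C_k be 2×2 Hermitian matrices with C_k = diag(c₁, c₂), c₁ > 0 > c₂, and suppose the (1,2) entry a₁₂ of A_k is nonzero. Then for each α ∈ {a̅₁₂/|a₁₂|·(±1)} (i.e. α = ±|a₁₂|/a₁₂), the vector z(α) = [√(−c₂/(c₁−c₂)); α√(c₁/(c₁−c₂))] is a unit vector satisfying z(α)ᴴC_k z(α) = 0, and (ν(α), θ(α), z(α)) with θ(α) = z(α)ᴴA_k z(α) and ν(α) = z(α)ᴴC_kA_kz(α)/‖C_kz(α)‖² is a 2D-eigentriplet of (A_k, C_k):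 (A_k − ν(α)C_k)z(α) = θ(α) z(α). -/
open scoped Matrix

/-!
Since `zᴴ C z = 0`, the vectors `z` and `C z` are nonzero and orthogonal, hence a basis of `ℂ²`,
so `(A - ν C) z = θ z` only has to be tested against them: it reads `zᴴ A z = θ` and
`zᴴ C A z = ν ‖C z‖²`. As `θ` and `ν` are defined through real parts, this holds once `zᴴ A z` and
`zᴴ C A z` are real: the first because `A` is Hermitian, the second because for `z = (s₁, α s₂)`
its imaginary part is `(c₁ - c₂) s₁ s₂ Im (α a₁₂)`, and `α a₁₂ = ±|a₁₂|`.
-/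

namespace Matrix

theorem eq_zero_of_star_dotProduct_eq_zero {𝕜 ι n : Type*} [RCLike 𝕜] [Fintype ι] [Fintype n]
    {v : ι → n → 𝕜} (hcard : Fintype.card ι = Fintype.card n) (hv : ∀ i, v i ≠ 0)
    (horth : Pairwise fun i j ↦ star (v i) ⬝ᵥ v j = 0) {x : n → 𝕜}
    (hx : ∀ i, star (v i) ⬝ᵥ x = 0) : x = 0 := by
  let w : ι → EuclideanSpace 𝕜 n := fun i ↦ WithLp.toLp 2 (v i)
  have hli : LinearIndependent 𝕜 w := by
    refine linearIndependent_of_ne_zero_of_inner_eq_zero (fun i ↦ ?_) fun i j hij ↦ ?_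
    · simpa [w] using hv i
    · simpa [w, EuclideanSpace.inner_toLp_toLp, dotProduct_comm] using horth hij
  let b := basisOfLinearIndependentOfCardEqFinrank' w hli (by simp [hcard])
  have : WithLp.toLp 2 x = 0 := InnerProductSpace.ext_inner_left_basis b fun i ↦ by
    simpa [b, w, EuclideanSpace.inner_toLp_toLp, dotProduct_comm] using hx i
  simpa using this

open ComplexOrder in
theorem star_dotProduct_self_eq_ofReal_re {n : Type*} [Fintype n] (v : n → ℂ) :
    star v ⬝ᵥ v = ((star v ⬝ᵥ v).re : ℂ) :=
  Complex.ext (by simp) (by simp [← (Complex.nonneg_iff.mp (dotProduct_star_self_nonneg v)).2])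

theorem IsHermitian.star_mulVec_dotProduct {R n : Type*} [CommRing R] [StarRing R] [Fintype n]
    {C : Matrix n n R} (hC : C.IsHermitian) (z y : n → R) :
    star (C *ᵥ z) ⬝ᵥ y = star z ⬝ᵥ C *ᵥ y := by
  rw [star_mulVec, hC.eq, dotProduct_mulVec]

end Matrix

open ComplexOrder in
theorem is2DEigentriplet_of_card_eq_two {n : Type*} [Fintype n] (hn : Fintype.card n = 2)
    {A C : Matrix n n ℂ} (hA : A.IsHermitian) (hC : C.IsHermitian) {z : n → ℂ}
    (hzC : star z ⬝ᵥ C *ᵥ z = 0) (hzz : star z ⬝ᵥ z = 1) (hCz : C *ᵥ z ≠ 0)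
    (him : (star z ⬝ᵥ (C * A) *ᵥ z).im = 0) :
    Is2DEigentriplet A C ((star z ⬝ᵥ (C * A) *ᵥ z).re / (star (C *ᵥ z) ⬝ᵥ C *ᵥ z).re)
      (star z ⬝ᵥ A *ᵥ z).re z := by
  refine ⟨?_, hzC, hzz⟩
  set N := star z ⬝ᵥ (C * A) *ᵥ z
  set D := star (C *ᵥ z) ⬝ᵥ C *ᵥ z
  have hz : z ≠ 0 := by rintro rfl; simp at hzz
  have hθ : star z ⬝ᵥ A *ᵥ z = ((star z ⬝ᵥ A *ᵥ z).re : ℂ) :=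
    Complex.ext (by simp) (by simpa using hA.im_star_dotProduct_mulVec_self z)
  have hN : N = (N.re : ℂ) := Complex.ext (by simp) (by simp [him])
  have hNC : star (C *ᵥ z) ⬝ᵥ A *ᵥ z = N := by
    rw [hC.star_mulVec_dotProduct, Matrix.mulVec_mulVec]
  have hD : (D.re : ℂ) ≠ 0 := by
    rw [← Matrix.star_dotProduct_self_eq_ofReal_re]
    exact dotProduct_star_self_eq_zero.not.mpr hCz
  rw [← sub_eq_zero]
  refine Matrix.eq_zero_of_star_dotProduct_eq_zero (v := ![z, C *ᵥ z]) (by simp [hn])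
    (Fin.forall_fin_two.mpr ⟨hz, hCz⟩) ?_ (Fin.forall_fin_two.mpr ⟨?_, ?_⟩)
  · intro i j hij
    fin_cases i <;> fin_cases j <;> simp at hij ⊢
    · exact hzC
    · rw [hC.star_mulVec_dotProduct, hzC]
  · simp [Matrix.sub_mulVec, Matrix.smul_mulVec, dotProduct_sub, hzC, hzz, ← hθ]
  · simp only [Matrix.cons_val_one, Matrix.cons_val_zero, Matrix.sub_mulVec, Matrix.smul_mulVec,
      dotProduct_sub, dotProduct_smul, hNC, hC.star_mulVec_dotProduct z z, hzC]
    rw [Matrix.star_dotProduct_self_eq_ofReal_re (C *ᵥ z), smul_zero, sub_zero, smul_eq_mul,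
      Complex.ofReal_div, div_mul_cancel₀ _ hD, ← hN, sub_self]

section FinTwo

variable {c₁ c₂ s₁ s₂ : ℝ} {α : ℂ}

theorem star_dotProduct_self_fin_two :
    star ![(s₁ : ℂ), α * s₂] ⬝ᵥ ![(s₁ : ℂ), α * s₂] = s₁ ^ 2 + ‖α‖ ^ 2 * s₂ ^ 2 := by
  simp [dotProduct, Fin.sum_univ_two, ← Complex.mul_conj']
  ring

theorem star_dotProduct_diag_mulVec_fin_two :
    star ![(s₁ : ℂ), α * s₂] ⬝ᵥ !![(c₁ : ℂ), 0; 0, (c₂ : ℂ)] *ᵥ ![(s₁ : ℂ), α * s₂] =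
      c₁ * s₁ ^ 2 + c₂ * ‖α‖ ^ 2 * s₂ ^ 2 := by
  simp [dotProduct, Fin.sum_univ_two, ← Complex.mul_conj', Matrix.mulVec]
  ring

theorem im_star_dotProduct_diag_mul_mulVec_fin_two {A : Matrix (Fin 2) (Fin 2) ℂ}
    (hA : A.IsHermitian) :
    (star ![(s₁ : ℂ), α * s₂] ⬝ᵥ (!![(c₁ : ℂ), 0; 0, (c₂ : ℂ)] * A) *ᵥ ![(s₁ : ℂ), α * s₂]).im =
      (c₁ - c₂) * s₁ * s₂ * (α * A 0 1).im := by
  have h00 : (A 0 0).im = 0 := Complex.conj_eq_iff_im.mp (hA.apply 0 0)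
  have h11 : (A 1 1).im = 0 := Complex.conj_eq_iff_im.mp (hA.apply 1 1)
  have h10 : A 1 0 = star (A 0 1) := (hA.apply 1 0).symm
  simp [dotProduct, Fin.sum_univ_two, Matrix.mulVec, Matrix.mul_apply, h00, h11, h10]
  ring

end FinTwo

section Weights

variable {c₁ c₂ : ℝ}

theorem sq_sqrt_add_sq_sqrt_eq_one (hc₁ : 0 < c₁) (hc₂ : c₂ ≤ 0) :
    √(-c₂ / (c₁ - c₂)) ^ 2 + √(c₁ / (c₁ - c₂)) ^ 2 = 1 := by
  have hd : 0 < c₁ - c₂ := by linarith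
  rw [Real.sq_sqrt (div_nonneg (by linarith) hd.le), Real.sq_sqrt (div_nonneg hc₁.le hd.le)]
  field_simp
  ring

theorem mul_sq_sqrt_add_mul_sq_sqrt_eq_zero (hc₁ : 0 ≤ c₁) (hc₂ : c₂ ≤ 0) :
    c₁ * √(-c₂ / (c₁ - c₂)) ^ 2 + c₂ * √(c₁ / (c₁ - c₂)) ^ 2 = 0 := by
  have hd : 0 ≤ c₁ - c₂ := by linarith
  rw [Real.sq_sqrt (div_nonneg (by linarith) hd), Real.sq_sqrt (div_nonneg hc₁ hd)]
  ring

end Weights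

/-- for a 2×2 Hermitian `A` with `a₁₂ ≠ 0` and
`C = diag(c₁, c₂)` with `c₁ > 0 > c₂`, each choice `α = ±|a₁₂|/a₁₂`
yields a 2D-eigentriplet `(ν(α), θ(α), z(α))` of `(A, C)`. -/
theorem stmt11 (A : Matrix (Fin 2) (Fin 2) ℂ) (hA : A.IsHermitian)
    (h12 : A 0 1 ≠ 0)
    (c₁ c₂ : ℝ) (hc₁ : 0 < c₁) (hc₂ : c₂ < 0)
    (C : Matrix (Fin 2) (Fin 2) ℂ)
    (hC : C = !![(c₁ : ℂ), 0; 0, (c₂ : ℂ)])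
    (α : ℂ)
    (hα : α = (‖A 0 1‖ : ℂ) / A 0 1 ∨
          α = -((‖A 0 1‖ : ℂ) / A 0 1))
    (z : Fin 2 → ℂ)
    (hz : z = ![(Real.sqrt (-c₂ / (c₁ - c₂)) : ℂ),
                α * (Real.sqrt (c₁ / (c₁ - c₂)) : ℂ)])
    (θ ν : ℝ)
    (hθ : θ = (star z ⬝ᵥ A.mulVec z).re)
    (hν : ν = (star z ⬝ᵥ (C * A).mulVec z).re /
        (star (C.mulVec z) ⬝ᵥ C.mulVec z).re) :
    Is2DEigentriplet A C ν θ z := by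
  subst hC hz hθ hν
  have hs₁ : 0 < √(-c₂ / (c₁ - c₂)) := Real.sqrt_pos.2 (div_pos (by linarith) (by linarith))
  have hα1 : ‖α‖ = 1 := by rcases hα with rfl | rfl <;> simp [h12]
  have hαA : (α * A 0 1).im = 0 := by rcases hα with rfl | rfl <;> simp [h12]
  have hC : (!![(c₁ : ℂ), 0; 0, (c₂ : ℂ)]).IsHermitian := by
    ext i j; fin_cases i <;> fin_cases j <;> simp
  refine is2DEigentriplet_of_card_eq_two (Fintype.card_fin 2) hA hC ?_ ?_ ?_ ?_
  · rw [star_dotProduct_diag_mulVec_fin_two, hα1, Complex.ofReal_one, one_pow, mul_one]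
    exact_mod_cast mul_sq_sqrt_add_mul_sq_sqrt_eq_zero hc₁.le hc₂.le
  · rw [star_dotProduct_self_fin_two, hα1, Complex.ofReal_one, one_pow, one_mul]
    exact_mod_cast sq_sqrt_add_sq_sqrt_eq_one hc₁ hc₂.le
  · intro h
    simpa [hs₁.ne', hc₁.ne'] using congrFun h 0
  · rw [im_star_dotProduct_diag_mul_mulVec_fin_two hA, hαA, mul_zero]
end

section
/- Under the setting of the previous interpolation construction: suppose additionally (A − μ*C)x_a = λ*x_a + r_a and (A − μ*C)x_b = λ*x_b + r_b for a Hermitian pair (A, C), with μ*, λ* real. Then for x̂ = u(θ̂) with θ̂ ∈ [0, θ_b], one has (A − μ*C)x̂ = λ*x̂ + r̂ where ‖r̂‖ ≤ 2‖r_a‖ + ‖r_b‖. -/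
/-!
Since `x̂ = (cos θ̂ - s t) x_a + s x_b` with `s = sin θ̂ / √(1 - t²)`, and the residual of
`A - μ C` with respect to a fixed shift `λ` depends linearly on the vector, `r̂` is the same
combination of `r_a` and `r_b`. For the bound, `θ̂ ≤ arccos t ≤ π/2` gives
`sin θ̂ ≤ sin (arccos t) = √(1 - t²)`, so the coefficients `cos θ̂`, `s` and `t` of
`r̂ = cos θ̂ r_a + s (r_b - t r_a)` all have absolute value at most one.
-/

open scoped Matrix

theorem Matrix.mulVec_smul_add_smul_of_residual {n R : Type*} [Fintype n] [CommRing R]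
    (M : Matrix n n R) {x y r r' : n → R} {lam : R}
    (hx : M *ᵥ x = lam • x + r) (hy : M *ᵥ y = lam • y + r') (a b : R) :
    M *ᵥ (a • x + b • y) = lam • (a • x + b • y) + (a • r + b • r') := by
  rw [Matrix.mulVec_add, Matrix.mulVec_smul, Matrix.mulVec_smul, hx, hy]
  module

theorem norm_smul_add_smul_sub_smul_le {𝕜 E : Type*} [NormedField 𝕜] [SeminormedAddCommGroup E]
    [NormedSpace 𝕜 E] {c s t : 𝕜} (hc : ‖c‖ ≤ 1) (hs : ‖s‖ ≤ 1) (ht : ‖t‖ ≤ 1) (a b : E) :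
    ‖c • a + s • (b - t • a)‖ ≤ 2 * ‖a‖ + ‖b‖ := by
  have hb : ‖b - t • a‖ ≤ ‖b‖ + ‖a‖ :=
    calc ‖b - t • a‖ ≤ ‖b‖ + ‖t‖ * ‖a‖ := (norm_sub_le _ _).trans_eq (by rw [norm_smul])
      _ ≤ ‖b‖ + ‖a‖ := by gcongr; exact mul_le_of_le_one_left (norm_nonneg a) ht
  calc ‖c • a + s • (b - t • a)‖ ≤ ‖c‖ * ‖a‖ + ‖s‖ * ‖b - t • a‖ := by
        rw [← norm_smul, ← norm_smul]; exact norm_add_le _ _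
    _ ≤ 1 * ‖a‖ + 1 * (‖b‖ + ‖a‖) := by gcongr
    _ = 2 * ‖a‖ + ‖b‖ := by ring

namespace Real

theorem sin_le_sqrt_one_sub_sq_of_mem_Icc_arccos {t θ : ℝ} (ht : 0 ≤ t)
    (hθ : θ ∈ Set.Icc 0 (arccos t)) : sin θ ≤ √(1 - t ^ 2) := by
  rw [← sin_arccos]
  exact sin_le_sin_of_le_of_le_pi_div_two (by linarith [hθ.1, pi_pos])
    (arccos_le_pi_div_two.mpr ht) hθ.2

theorem sin_div_sqrt_one_sub_sq_mem_Icc {t θ : ℝ} (ht : 0 ≤ t)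
    (hθ : θ ∈ Set.Icc 0 (arccos t)) : sin θ / √(1 - t ^ 2) ∈ Set.Icc 0 1 :=
  ⟨div_nonneg (sin_nonneg_of_nonneg_of_le_pi hθ.1 (hθ.2.trans (arccos_le_pi t)))
      (sqrt_nonneg _),
    div_le_one_of_le₀ (sin_le_sqrt_one_sub_sq_of_mem_Icc_arccos ht hθ) (sqrt_nonneg _)⟩

end Real

theorem stmt14_general {n : Type*} [Fintype n]
    (A C : Matrix n n ℂ)
    (μ lam : ℝ)
    (xa xb : n → ℂ)
    (t : ℝ)
    (ht0 : 0 ≤ t) (ht1 : t < 1)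
    (ra rb : n → ℂ)
    (hra : (A - (μ : ℂ) • C).mulVec xa = (lam : ℂ) • xa + ra)
    (hrb : (A - (μ : ℂ) • C).mulVec xb = (lam : ℂ) • xb + rb)
    (qb : n → ℂ)
    (hqb : qb = ((Real.sqrt (1 - t ^ 2) : ℂ))⁻¹ • (xb - (t : ℂ) • xa))
    (θhat : ℝ) (hθhat : θhat ∈ Set.Icc 0 (Real.arccos t))
    (xhat : n → ℂ)
    (hxhat : xhat = ((Real.cos θhat : ℂ)) • xa + ((Real.sin θhat : ℂ)) • qb)
    (rhat : n → ℂ)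
    (hrhat : rhat = ((Real.cos θhat : ℂ)) • ra +
      ((Real.sin θhat / Real.sqrt (1 - t ^ 2) : ℝ) : ℂ) • (rb - (t : ℂ) • ra)) :
    (A - (μ : ℂ) • C).mulVec xhat = (lam : ℂ) • xhat + rhat ∧
      vecNorm rhat ≤ 2 * vecNorm ra + vecNorm rb := by
  set s := Real.sin θhat / Real.sqrt (1 - t ^ 2)
  have hxhat' : xhat = ((Real.cos θhat - s * t : ℝ) : ℂ) • xa + (s : ℂ) • xb := by
    rw [hxhat, hqb]; push_cast [s]; module
  have hrhat' : rhat = ((Real.cos θhat - s * t : ℝ) : ℂ) • ra + (s : ℂ) • rb := by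
    rw [hrhat]; push_cast; module
  constructor
  · rw [hxhat', hrhat']
    exact (A - (μ : ℂ) • C).mulVec_smul_add_smul_of_residual hra hrb _ _
  · have hs := Real.sin_div_sqrt_one_sub_sq_mem_Icc ht0 hθhat
    simp only [vecNorm, hrhat, map_add, map_smul, map_sub]
    apply norm_smul_add_smul_sub_smul_le <;>
      simp only [Complex.norm_real, Real.norm_eq_abs, abs_le]
    · exact ⟨Real.neg_one_le_cos _, Real.cos_le_one _⟩
    · exact ⟨by linarith [hs.1], hs.2⟩
    · exact ⟨by linarith, ht1.le⟩

/-- residual bound for the interpolated vector `x̂ = u(θ̂)`: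
if `(A − μ*C)x_a = λ*x_a + r_a` and `(A − μ*C)x_b = λ*x_b + r_b`, then
`(A − μ*C)x̂ = λ*x̂ + r̂` with `‖r̂‖ ≤ 2‖r_a‖ + ‖r_b‖`. -/
theorem stmt14 {n : Type*} [Fintype n] [DecidableEq n]
    (A C : Matrix n n ℂ) (hA : A.IsHermitian) (hC : C.IsHermitian)
    (μ lam : ℝ)
    (xa xb : n → ℂ)
    (hxa : star xa ⬝ᵥ xa = 1) (hxb : star xb ⬝ᵥ xb = 1)
    (t : ℝ) (ht : (star xa ⬝ᵥ xb) = (t : ℂ))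
    (ht0 : 0 ≤ t) (ht1 : t < 1)
    (ra rb : n → ℂ)
    (hra : (A - (μ : ℂ) • C).mulVec xa = (lam : ℂ) • xa + ra)
    (hrb : (A - (μ : ℂ) • C).mulVec xb = (lam : ℂ) • xb + rb)
    (qb : n → ℂ)
    (hqb : qb = ((Real.sqrt (1 - t ^ 2) : ℂ))⁻¹ • (xb - (t : ℂ) • xa))
    (θhat : ℝ) (hθhat : θhat ∈ Set.Icc 0 (Real.arccos t))
    (xhat : n → ℂ)
    (hxhat : xhat = ((Real.cos θhat : ℂ)) • xa + ((Real.sin θhat : ℂ)) • qb)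
    (rhat : n → ℂ)
    (hrhat : rhat = ((Real.cos θhat : ℂ)) • ra +
      ((Real.sin θhat / Real.sqrt (1 - t ^ 2) : ℝ) : ℂ) • (rb - (t : ℂ) • ra)) :
    (A - (μ : ℂ) • C).mulVec xhat = (lam : ℂ) • xhat + rhat ∧
      vecNorm rhat ≤ 2 * vecNorm ra + vecNorm rb :=
  stmt14_general A C μ lam xa xb t ht0 ht1 ra rb hra hrb qb hqb θhat hθhat xhat hxhat rhat hrhat
end
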